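/- For every integer N₀ ≥ 1 there exists an integer N ≥ N₀ such that for every k ∈ ℤ³ with 0 < |k|_∞ ≤ N₀ there exist l, m ∈ ℤ³ with N₀ < |l|_∞ ≤ N, N₀ < |m|_∞ ≤ N, |l| ≠ |m|, l and m linearly independent, and k = l + m or k = l − m. -/

import Mathlib

/-!
Choose a nonzero integer vector `w ⟂ k` with `|w|_∞ ≤ |k|_∞` and put `m = (2N₀ + 1) • w`,
`l = k + m`, so that `k = l - m`. Orthogonality gives `|l|² = |k|² + |m|² ≠ |m|²` and forces
`l, m` to be linearly independent, while `|m|_∞ ≥ 2N₀ + 1` and `|l|_∞ ≥ |m|_∞ - |k|_∞ > N₀`.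
-/

def ninf (k : Fin 3 → ℤ) : ℤ := max |k 0| (max |k 1| |k 2|)

open Matrix

section Orthogonal

variable {R ι : Type*} [CommRing R] [Fintype ι] {u v : ι → R}

theorem dotProduct_add_self_of_orthogonal (huv : u ⬝ᵥ v = 0) :
    (u + v) ⬝ᵥ (u + v) = u ⬝ᵥ u + v ⬝ᵥ v := by
  rw [add_dotProduct, dotProduct_add, dotProduct_add, dotProduct_comm v u, huv]
  ring

theorem dotProduct_add_self_ne_of_orthogonal [LinearOrder R] [IsStrictOrderedRing R]
    (huv : u ⬝ᵥ v = 0) (hu : u ≠ 0) : (u + v) ⬝ᵥ (u + v) ≠ v ⬝ᵥ v := by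
  rw [dotProduct_add_self_of_orthogonal huv, Ne, add_eq_right]
  exact dotProduct_self_eq_zero.not.mpr hu

theorem linearIndependent_pair_add_of_orthogonal [LinearOrder R] [IsStrictOrderedRing R]
    (huv : u ⬝ᵥ v = 0) (hu : u ≠ 0) (hv : v ≠ 0) :
    LinearIndependent R ![u + v, v] := by
  rw [LinearIndependent.pair_iff]
  intro a b hab
  have ha : a * (u ⬝ᵥ u) = 0 := by
    have := congrArg (u ⬝ᵥ ·) hab
    simpa [dotProduct_add, dotProduct_smul, huv] using this
  have ha : a = 0 := (mul_eq_zero.mp ha).resolve_right (dotProduct_self_eq_zero.not.mpr hu)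
  subst ha
  simp only [zero_smul, zero_add, smul_eq_zero, hv, or_false] at hab
  exact ⟨rfl, hab⟩

end Orthogonal

section SupNorm

variable {k l : Fin 3 → ℤ} {c : ℤ}

theorem ninf_le_iff : ninf k ≤ c ↔ ∀ i, |k i| ≤ c := by
  simp [ninf, Fin.forall_fin_succ]

theorem lt_ninf_iff : c < ninf k ↔ ∃ i, c < |k i| := by
  simp [ninf, Fin.exists_fin_succ]

theorem abs_le_ninf (i : Fin 3) : |k i| ≤ ninf k :=
  ninf_le_iff.mp le_rfl i

theorem ninf_nonneg : 0 ≤ ninf k :=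
  (abs_nonneg _).trans (abs_le_ninf 0)

theorem ninf_pos_iff : 0 < ninf k ↔ k ≠ 0 := by
  simp [lt_ninf_iff, funext_iff]

theorem ninf_add_le : ninf (k + l) ≤ ninf k + ninf l :=
  ninf_le_iff.mpr fun i => (abs_add_le _ _).trans (add_le_add (abs_le_ninf i) (abs_le_ninf i))

theorem ninf_neg : ninf (-k) = ninf k := by
  simp [ninf]

theorem ninf_sub_ninf_le : ninf l - ninf k ≤ ninf (k + l) := by
  have := ninf_add_le (k := k + l) (l := -k)
  rw [add_neg_cancel_comm, ninf_neg] at this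
  linarith

theorem ninf_smul : ninf (c • k) = |c| * ninf k := by
  simp [ninf, abs_mul, mul_max_of_nonneg _ _ (abs_nonneg c)]

end SupNorm

theorem exists_orthogonal_ne_zero_ninf_le {k : Fin 3 → ℤ} (hk : k ≠ 0) :
    ∃ w : Fin 3 → ℤ, k ⬝ᵥ w = 0 ∧ w ≠ 0 ∧ ninf w ≤ ninf k := by
  by_cases h : k 0 = 0 ∧ k 1 = 0
  · refine ⟨![1, 0, 0], by simp [dotProduct, Fin.sum_univ_three, h.1],
      by simp [funext_iff, Fin.forall_fin_succ], ?_⟩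
    calc ninf ![1, 0, 0] = 1 := by simp [ninf]
      _ ≤ ninf k := ninf_pos_iff.mpr hk
  · refine ⟨![k 1, -k 0, 0], by simp [dotProduct, Fin.sum_univ_three]; ring, ?_, ?_⟩
    · simpa [funext_iff, Fin.forall_fin_succ, and_comm] using h
    · simp [ninf_le_iff, Fin.forall_fin_succ, abs_le_ninf, ninf_nonneg]

theorem low_modes_from_high_modes_general (N₀ : ℕ) :
    ∃ N : ℕ, N₀ ≤ N ∧
      ∀ k : Fin 3 → ℤ, 0 < ninf k → ninf k ≤ N₀ →
        ∃ l m : Fin 3 → ℤ,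
          (N₀ : ℤ) < ninf l ∧ ninf l ≤ N ∧
          (N₀ : ℤ) < ninf m ∧ ninf m ≤ N ∧
          (∑ i, (l i) ^ 2) ≠ (∑ i, (m i) ^ 2) ∧
          LinearIndependent ℤ ![l, m] ∧
          (k = l + m ∨ k = l - m) := by
  refine ⟨2 * N₀ * (N₀ + 1), by nlinarith, fun k hk_pos hk_le => ?_⟩
  have hk : k ≠ 0 := ninf_pos_iff.mp hk_pos
  obtain ⟨w, hkw, hw, hwk⟩ := exists_orthogonal_ne_zero_ninf_le hk
  have hw_pos : 1 ≤ ninf w := ninf_pos_iff.mpr hw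
  set c : ℤ := 2 * N₀ + 1
  have hc : 0 < c := by positivity
  have hm : ninf (c • w) = c * ninf w := by rw [ninf_smul, abs_of_pos hc]
  have hl_lower := ninf_sub_ninf_le (k := k) (l := c • w)
  have hl_upper := ninf_add_le (k := k) (l := c • w)
  have hkm : k ⬝ᵥ (c • w) = 0 := by rw [dotProduct_smul, hkw, smul_zero]
  refine ⟨k + c • w, c • w, ?_, ?_, ?_, ?_, ?_, ?_, Or.inr (add_sub_cancel_right k _).symm⟩
  · nlinarith
  · push_cast; nlinarith
  · nlinarith
  · push_cast; nlinarith
  · simpa only [sq, dotProduct] using dotProduct_add_self_ne_of_orthogonal hkm hk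
  · exact linearIndependent_pair_add_of_orthogonal hkm hk (smul_ne_zero hc.ne' hw)

/-- For every `N₀ ≥ 1` there is `N ≥ N₀` such that every low mode `k`
(`0 < |k|_∞ ≤ N₀`) can be written as `k = l + m` or `k = l − m` with
`l, m` high modes (`N₀ < |l|_∞, |m|_∞ ≤ N`), `|l| ≠ |m|`, and `l, m`
linearly independent. -/
theorem low_modes_from_high_modes (N₀ : ℕ) (hN₀ : 1 ≤ N₀) :
    ∃ N : ℕ, N₀ ≤ N ∧
      ∀ k : Fin 3 → ℤ, 0 < ninf k → ninf k ≤ N₀ →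
        ∃ l m : Fin 3 → ℤ,
          (N₀ : ℤ) < ninf l ∧ ninf l ≤ N ∧
          (N₀ : ℤ) < ninf m ∧ ninf m ≤ N ∧
          (∑ i, (l i) ^ 2) ≠ (∑ i, (m i) ^ 2) ∧
          LinearIndependent ℤ ![l, m] ∧
          (k = l + m ∨ k = l - m) :=
  low_modes_from_high_modes_general N₀
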